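/- Let (G, ℋ) be a proper pair and let Γ be a Cayley-Abels graph of G with respect to ℋ containing at least one edge. Let ℋ_∞ denote the set of non-compact members of ℋ, and let G/ℋ_∞ = { gH : g ∈ G, H ∈ ℋ_∞ } be the G-set given by the disjoint union of the coset spaces G/H for H ∈ ℋ_∞, with G acting by left translation. Then there is a G-equivariant bijection between G/ℋ_∞ and the set of vertices of Γ of infinite degree. -/

import Mathlib

open MulAction

universe u v

/-- A topological group is compactly generated if it has a compact subset that
generates it algebraically. -/
def IsCompactlyGeneratedGroup (G : Type*) [Group G] [TopologicalSpace G] : Prop :=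
  ∃ S : Set G, IsCompact S ∧ Subgroup.closure S = ⊤

/-- A topological group `G` is compactly presented if there are a compact generating set `S`
and `n : ℕ` such that the kernel of the canonical map `FreeGroup S →* G` is generated as a
normal subgroup by its elements of word length at most `n`. -/
def IsCompactlyPresentedGroup (G : Type*) [Group G] [TopologicalSpace G] : Prop :=
  ∃ (S : Set G) (n : ℕ), IsCompact S ∧ Subgroup.closure S = ⊤ ∧
    Subgroup.normalClosure
      {x : FreeGroup S |
        x ∈ (FreeGroup.lift (fun s : S => (s : G))).ker ∧
          ∃ l : List (S × Bool), FreeGroup.mk l = x ∧ l.length ≤ n} =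
      (FreeGroup.lift (fun s : S => (s : G))).ker

/-- A topological group is coherent if every closed compactly generated subgroup
(with the subspace topology) is compactly presented. -/
def IsCoherentGroup (G : Type*) [Group G] [TopologicalSpace G] : Prop :=
  ∀ Q : Subgroup G, IsClosed (Q : Set G) → IsCompactlyGeneratedGroup Q →
    IsCompactlyPresentedGroup Q

section Amalgam

variable {G : Type u} [Group G]

/-- The two-element family of groups `A`, `B`. -/
def amalgamFamily (A B : Subgroup G) : Bool → Type u := fun b => match b with
  | true => A
  | false => B

instance (A B : Subgroup G) : (b : Bool) → Group (amalgamFamily A B b)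
  | true => inferInstanceAs (Group A)
  | false => inferInstanceAs (Group B)

/-- The inclusions of `C = A ⊓ B` into `A` and `B`. -/
def amalgamMaps (A B : Subgroup G) : (b : Bool) → (↥(A ⊓ B) →* amalgamFamily A B b)
  | true => Subgroup.inclusion inf_le_left
  | false => Subgroup.inclusion inf_le_right

/-- The inclusions of `A` and `B` into `G`. -/
def amalgamProj (A B : Subgroup G) : (b : Bool) → (amalgamFamily A B b →* G)
  | true => A.subtype
  | false => B.subtype

/-- The canonical homomorphism from the pushout (in the category of groups) of the
inclusions `A ⊓ B ↪ A` and `A ⊓ B ↪ B` to `G`. -/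
def amalgamCanonicalHom (A B : Subgroup G) : Monoid.PushoutI (amalgamMaps A B) →* G :=
  Monoid.PushoutI.lift (amalgamProj A B) (A ⊓ B).subtype
    (by rintro (_ | _) <;> exact MonoidHom.ext fun x => rfl)

/-- `G` splits as the amalgamated free product `A ∗_(A ⊓ B) B` if the canonical homomorphism
from the pushout of the inclusions to `G` is bijective. -/
def IsAmalgamatedProduct (A B : Subgroup G) : Prop :=
  Function.Bijective (amalgamCanonicalHom A B)

end Amalgam

section Graphs

variable {V : Type v}

/-- The graph obtained from `Γ` by deleting the vertex `v` (making it isolated). -/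
def SimpleGraph.deleteVertex (Γ : SimpleGraph V) (v : V) : SimpleGraph V where
  Adj a b := Γ.Adj a b ∧ a ≠ v ∧ b ≠ v
  symm := ⟨fun a b h => ⟨h.1.symm, h.2.2, h.2.1⟩⟩
  loopless := ⟨fun a h => Γ.loopless.irrefl a h.1⟩

/-- `Γ` is fine at `v` if for every neighbour `x` of `v` and every `n`, there are only
finitely many neighbours of `v` joined to `x` by a path of length at most `n` avoiding `v`;
i.e. balls of the angle metric on the neighbours of `v` are finite. -/
def SimpleGraph.FineAt (Γ : SimpleGraph V) (v : V) : Prop :=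
  ∀ x ∈ Γ.neighborSet v, ∀ n : ℕ,
    {y | y ∈ Γ.neighborSet v ∧ ∃ p : (Γ.deleteVertex v).Walk x y, p.length ≤ n}.Finite

/-- A graph is fine if it is fine at every vertex. -/
def SimpleGraph.Fine (Γ : SimpleGraph V) : Prop := ∀ v : V, Γ.FineAt v

/-- A connected graph is hyperbolic if its path metric satisfies the four point condition
up to an additive constant. -/
def SimpleGraph.IsHyperbolic (Γ : SimpleGraph V) : Prop :=
  ∃ δ : ℝ, 0 ≤ δ ∧ ∀ x y z w : V,
    (Γ.dist x y + Γ.dist z w : ℝ) ≤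
      max ((Γ.dist x z + Γ.dist y w : ℝ)) ((Γ.dist x w + Γ.dist y z : ℝ)) + δ

/-- Two graphs (with their path metrics) are quasi-isometric. -/
def QuasiIsometricGraphs {V₁ : Type*} {V₂ : Type*}
    (Γ₁ : SimpleGraph V₁) (Γ₂ : SimpleGraph V₂) : Prop :=
  ∃ (f : V₁ → V₂) (L C : ℝ), 1 ≤ L ∧ 0 ≤ C ∧
    (∀ x y : V₁,
      L⁻¹ * (Γ₁.dist x y : ℝ) - C ≤ (Γ₂.dist (f x) (f y) : ℝ) ∧
      (Γ₂.dist (f x) (f y) : ℝ) ≤ L * (Γ₁.dist x y : ℝ) + C) ∧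
    ∀ z : V₂, ∃ x : V₁, (Γ₂.dist z (f x) : ℝ) ≤ C

end Graphs

section GGraphs

variable (G : Type u) [Group G] [TopologicalSpace G] {V : Type v} [MulAction G V]

/-- The action of `G` on the vertices of `Γ` is by graph automorphisms. -/
def IsGraphAction (Γ : SimpleGraph V) : Prop :=
  ∀ (g : G) (a b : V), Γ.Adj a b → Γ.Adj (g • a) (g • b)

/-- The action is discrete: all vertex stabilizers are open. -/
def IsDiscreteAction (Γ : SimpleGraph V) : Prop :=
  ∀ v : V, IsOpen ((stabilizer G v : Subgroup G) : Set G)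

/-- The action is cocompact: finitely many orbits of vertices and of edges. -/
def IsCocompactAction (Γ : SimpleGraph V) : Prop :=
  (∃ s : Set V, s.Finite ∧ ∀ v : V, ∃ g : G, g • v ∈ s) ∧
  (∃ t : Set (V × V), t.Finite ∧ ∀ a b : V, Γ.Adj a b → ∃ g : G, (g • a, g • b) ∈ t)

/-- Pointwise edge stabilizers are compact. -/
def HasCompactEdgeStabilizers (Γ : SimpleGraph V) : Prop :=
  ∀ a b : V, Γ.Adj a b →
    IsCompact ((stabilizer G a ⊓ stabilizer G b : Subgroup G) : Set G)

/-- The conjugate `g H g⁻¹` of a subgroup. -/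
def conjSubgroup {G : Type u} [Group G] (g : G) (H : Subgroup G) : Subgroup G :=
  Subgroup.map (MulAut.conj g).toMonoidHom H

/-- A proper pair: `G` has a compact open subgroup, `ℋ` is a finite collection of open
subgroups, and no two distinct non-compact members of `ℋ` are conjugate. -/
def IsProperPair (G : Type u) [Group G] [TopologicalSpace G]
    (ℋ : Finset (Subgroup G)) : Prop :=
  (∃ U : Subgroup G, IsCompact (U : Set G) ∧ IsOpen (U : Set G)) ∧
  (∀ H ∈ ℋ, IsOpen ((H : Subgroup G) : Set G)) ∧
  (∀ H ∈ ℋ, ∀ K ∈ ℋ, ¬ IsCompact ((H : Subgroup G) : Set G) →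
    ¬ IsCompact ((K : Subgroup G) : Set G) →
    (∃ g : G, conjSubgroup g H = K) → H = K)

/-- `Γ` is a Cayley-Abels graph of `G` with respect to `ℋ`. -/
def IsCayleyAbelsGraph (ℋ : Finset (Subgroup G)) (Γ : SimpleGraph V) : Prop :=
  IsGraphAction G Γ ∧
  Γ.Connected ∧
  IsDiscreteAction G Γ ∧
  IsCocompactAction G Γ ∧
  HasCompactEdgeStabilizers G Γ ∧
  (∀ v : V, IsCompact ((stabilizer G v : Subgroup G) : Set G) ∨
    ∃ H ∈ ℋ, ∃ g : G, stabilizer G v = conjSubgroup g H) ∧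
  (∀ H ∈ ℋ, ∃ v : V, stabilizer G v = H) ∧
  (∀ H ∈ ℋ, ¬ IsCompact ((H : Subgroup G) : Set G) →
    ∀ u v : V, stabilizer G u = H → stabilizer G v = H → ∃ g : G, g • u = v)

end GGraphs

/-!
A vertex of a Cayley-Abels graph has infinite degree exactly when its stabilizer is non-compact.
If `Stab(v)` is compact, its orbits on vertices are finite because point stabilizers are open,
and the neighbours of `v` fall into finitely many such orbits, one per orbit of edges. If
`Stab(v)` has a finite orbit on a neighbour `x`, it is a finite union of translates of the
compact edge stabilizer `Stab(v) ∩ Stab(x)`. So the vertices of infinite degree are those whose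
stabilizer is conjugate to some non-compact `H ∈ ℋ`; each such `H` is the stabilizer of a
single orbit of vertices, identified with `G/H` by the orbit map, and distinct non-compact
members of `ℋ` give distinct orbits because they are not conjugate.
-/

open scoped Pointwise

section Conjugation

variable {G : Type u} [Group G]

theorem stabilizer_smul_eq_conjSubgroup {V : Type v} [MulAction G V] (g : G) (v : V) :
    stabilizer G (g • v) = conjSubgroup g (stabilizer G v) :=
  stabilizer_smul_eq_stabilizer_map_conj g v

theorem conjSubgroup_injective (g : G) : Function.Injective (conjSubgroup g) :=
  Subgroup.map_injective (MulAut.conj g).injective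

theorem isCompact_conjSubgroup_iff [TopologicalSpace G] [ContinuousMul G] {g : G}
    {H : Subgroup G} : IsCompact (conjSubgroup g H : Set G) ↔ IsCompact (H : Set G) :=
  ((Homeomorph.mulLeft g).trans (Homeomorph.mulRight g⁻¹)).isCompact_image

theorem isCompact_stabilizer_iff_of_mem_orbit [TopologicalSpace G] [ContinuousMul G]
    {V : Type v} [MulAction G V] {u w : V} (hw : w ∈ orbit G u) :
    IsCompact (stabilizer G w : Set G) ↔ IsCompact (stabilizer G u : Set G) := by
  obtain ⟨g, rfl⟩ := hw
  rw [stabilizer_smul_eq_conjSubgroup, isCompact_conjSubgroup_iff]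

end Conjugation

section Orbits

variable {G : Type u} [Group G] {V : Type v} [MulAction G V]

theorem exists_injective_equivariant_range_eq_orbit {H : Subgroup G} {x : V}
    (hx : stabilizer G x = H) :
    ∃ φ : G ⧸ H → V, Function.Injective φ ∧ Set.range φ = orbit G x ∧
      ∀ (g : G) (c : G ⧸ H), φ (g • c) = g • φ c := by
  subst hx
  refine ⟨ofQuotientStabilizer G x, injective_ofQuotientStabilizer G x, ?_,
    ofQuotientStabilizer_smul G x⟩
  ext y
  constructor
  · rintro ⟨c, rfl⟩
    induction c using QuotientGroup.induction_on with
    | H g => exact ⟨g, rfl⟩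
  · rintro ⟨g, rfl⟩
    exact ⟨g, rfl⟩

variable [TopologicalSpace G] [ContinuousMul G]

theorem IsCompact.finite_image_smul_of_isOpen_stabilizer {S : Set G} (hS : IsCompact S) {x : V}
    (hx : IsOpen (stabilizer G x : Set G)) : ((· • x) '' S).Finite := by
  have hloc : IsLocallyConstant (· • x : G → V) := by
    refine (IsLocallyConstant.iff_exists_open _).mpr fun g => ?_
    refine ⟨(g * ·) '' stabilizer G x, (Homeomorph.mulLeft g).isOpenMap _ hx,
      ⟨1, one_mem _, mul_one g⟩, ?_⟩
    rintro _ ⟨s, hs, rfl⟩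
    rw [mul_smul, mem_stabilizer_iff.mp hs]
  have := isCompact_iff_compactSpace.mp hS
  rw [Set.image_eq_range]
  exact (hloc.comp_continuous continuous_subtype_val).range_finite

theorem Subgroup.isCompact_of_finite_image_smul {K : Subgroup G} {x : V}
    (hfin : ((· • x) '' (K : Set G)).Finite)
    (hcpt : IsCompact ((K ⊓ stabilizer G x : Subgroup G) : Set G)) :
    IsCompact (K : Set G) := by
  obtain ⟨F, hFK, hF, hFx⟩ := hfin.exists_subset_finite_image_eq subset_rfl
  suffices (K : Set G) = F * (K ⊓ stabilizer G x : Subgroup G) from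
    this ▸ hF.isCompact.mul hcpt
  refine subset_antisymm (fun g hg => ?_) ?_
  · obtain ⟨c, hcF, hcx⟩ : g • x ∈ (· • x) '' F := hFx ▸ ⟨g, hg, rfl⟩
    refine ⟨c, hcF, c⁻¹ * g, ⟨K.mul_mem (K.inv_mem (hFK hcF)) hg, ?_⟩, mul_inv_cancel_left c g⟩
    exact mem_stabilizer_iff.mpr (by rw [mul_smul, ← hcx, inv_smul_smul])
  · rintro _ ⟨c, hc, k, hk, rfl⟩
    exact K.mul_mem (hFK hc) hk.1

end Orbits

theorem SimpleGraph.Preconnected.nonempty_neighborSet {V : Type v} {Γ : SimpleGraph V}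
    (hΓ : Γ.Preconnected) {a b : V} (hab : Γ.Adj a b) (v : V) : (Γ.neighborSet v).Nonempty := by
  obtain rfl | hva := eq_or_ne v a
  · exact ⟨b, hab⟩
  · exact (hΓ v a).nonempty_neighborSet_left hva

section Degree

variable {G : Type u} [Group G] [TopologicalSpace G] [ContinuousMul G] {V : Type v}
  [MulAction G V] {Γ : SimpleGraph V}

theorem neighborSet_finite_of_isCompact_stabilizer (hdisc : IsDiscreteAction G Γ)
    (hcocpt : IsCocompactAction G Γ) {v : V} (hv : IsCompact (stabilizer G v : Set G)) :
    (Γ.neighborSet v).Finite := by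
  obtain ⟨-, t, ht, hedges⟩ := hcocpt
  have hcover : Γ.neighborSet v ⊆ ⋃ p ∈ t, {x | ∃ g : G, g • v = p.1 ∧ g • x = p.2} :=
    fun x hx => by
      obtain ⟨g, hg⟩ := hedges v x hx
      exact Set.mem_biUnion hg ⟨g, rfl, rfl⟩
  refine (ht.biUnion fun p _ => ?_).subset hcover
  -- the neighbours in the edge orbit of `p` lie in a single `Stab(v)`-orbit
  rcases Set.eq_empty_or_nonempty {x | ∃ g : G, g • v = p.1 ∧ g • x = p.2} with
    hempty | ⟨x₀, g₀, hv₀, hx₀⟩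
  · exact hempty ▸ Set.finite_empty
  · refine (hv.finite_image_smul_of_isOpen_stabilizer (hdisc x₀)).subset ?_
    rintro x ⟨g, hgv, hgx⟩
    refine ⟨g⁻¹ * g₀, ?_, ?_⟩
    · exact mem_stabilizer_iff.mpr (by rw [mul_smul, hv₀, ← hgv, inv_smul_smul])
    · show (g⁻¹ * g₀) • x₀ = x
      rw [mul_smul, hx₀, ← hgx, inv_smul_smul]

theorem neighborSet_infinite_of_not_isCompact_stabilizer (hact : IsGraphAction G Γ)
    (hΓ : Γ.Preconnected) (hestab : HasCompactEdgeStabilizers G Γ) (hedge : ∃ a b : V, Γ.Adj a b)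
    {v : V} (hv : ¬ IsCompact (stabilizer G v : Set G)) : (Γ.neighborSet v).Infinite := by
  obtain ⟨a, b, hab⟩ := hedge
  obtain ⟨x, hx⟩ := hΓ.nonempty_neighborSet hab v
  refine fun hfin => hv (Subgroup.isCompact_of_finite_image_smul (hfin.subset ?_) (hestab v x hx))
  rintro _ ⟨g, hg, rfl⟩
  exact mem_stabilizer_iff.mp hg ▸ hact g v x hx

theorem IsCayleyAbelsGraph.neighborSet_infinite_iff {ℋ : Finset (Subgroup G)}
    (hCA : IsCayleyAbelsGraph G ℋ Γ) (hedge : ∃ a b : V, Γ.Adj a b) {v : V} :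
    (Γ.neighborSet v).Infinite ↔ ¬ IsCompact (stabilizer G v : Set G) := by
  obtain ⟨hact, hconn, hdisc, hcocpt, hestab, -⟩ := hCA
  exact ⟨fun hv hcpt => hv (neighborSet_finite_of_isCompact_stabilizer hdisc hcocpt hcpt),
    neighborSet_infinite_of_not_isCompact_stabilizer hact hconn.preconnected hestab hedge⟩

end Degree

section CayleyAbels

variable {G : Type u} [Group G] [TopologicalSpace G] {V : Type v} [MulAction G V]
  {ℋ : Finset (Subgroup G)}

theorem IsCayleyAbelsGraph.exists_mem_orbit [ContinuousMul G] {Γ : SimpleGraph V}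
    (hCA : IsCayleyAbelsGraph G ℋ Γ) {v : V} (hv : ¬ IsCompact (stabilizer G v : Set G)) :
    ∃ H ∈ ℋ, ¬ IsCompact (H : Set G) ∧ ∀ u : V, stabilizer G u = H → v ∈ orbit G u := by
  obtain ⟨-, -, -, -, -, hdich, -, htrans⟩ := hCA
  obtain hcpt | ⟨H, hHℋ, g, hvH⟩ := hdich v
  · exact absurd hcpt hv
  have hH : ¬ IsCompact (H : Set G) := by rwa [hvH, isCompact_conjSubgroup_iff] at hv
  refine ⟨H, hHℋ, hH, fun u hu => ?_⟩
  have hv' : stabilizer G (g⁻¹ • v) = H :=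
    conjSubgroup_injective g (by rw [← stabilizer_smul_eq_conjSubgroup, smul_inv_smul, hvH])
  obtain ⟨k, hk⟩ := htrans H hHℋ hH u (g⁻¹ • v) hu hv'
  exact ⟨g * k, show (g * k) • u = v by rw [mul_smul, hk, smul_inv_smul]⟩

theorem IsProperPair.eq_of_mem_orbit (hpp : IsProperPair G ℋ) {H K : Subgroup G} (hH : H ∈ ℋ)
    (hK : K ∈ ℋ) (hHc : ¬ IsCompact (H : Set G)) (hKc : ¬ IsCompact (K : Set G)) {u w : V}
    (hu : stabilizer G u = H) (hw : stabilizer G w = K) (huw : u ∈ orbit G w) : H = K := by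
  obtain ⟨g, rfl⟩ := huw
  rw [stabilizer_smul_eq_conjSubgroup, hw] at hu
  exact (hpp.2.2 K hK H hH hKc hHc ⟨g, hu⟩).symm

end CayleyAbels

theorem equivariant_bijection_cosets_infinite_degree_general
    {G : Type u} [Group G] [TopologicalSpace G] [IsTopologicalGroup G]
    (ℋ : Finset (Subgroup G)) (hpp : IsProperPair G ℋ)
    {V : Type v} [MulAction G V] (Γ : SimpleGraph V)
    (hCA : IsCayleyAbelsGraph G ℋ Γ)
    (hedge : ∃ a b : V, Γ.Adj a b) :
    ∃ f : ((H : {H : Subgroup G // H ∈ ℋ ∧ ¬ IsCompact (H : Set G)}) ×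
        (G ⧸ (H.1 : Subgroup G))) → V,
      (∀ x, (Γ.neighborSet (f x)).Infinite) ∧
      Function.Injective f ∧
      (∀ v : V, (Γ.neighborSet v).Infinite → ∃ x, f x = v) ∧
      (∀ (g : G) (H : {H : Subgroup G // H ∈ ℋ ∧ ¬ IsCompact (H : Set G)})
        (c : G ⧸ (H.1 : Subgroup G)), f ⟨H, g • c⟩ = g • f ⟨H, c⟩) := by
  obtain ⟨-, -, -, -, -, -, hrealize, -⟩ := id hCA
  choose u hu using fun H : {H : Subgroup G // H ∈ ℋ ∧ ¬ IsCompact (H : Set G)} =>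
    hrealize H.1 H.2.1
  choose φ hφinj hφrange hφsmul using fun H => exists_injective_equivariant_range_eq_orbit (hu H)
  have hφorbit : ∀ H c, φ H c ∈ orbit G (u H) := fun H c => hφrange H ▸ ⟨c, rfl⟩
  refine ⟨fun x => φ x.1 x.2, ?_, ?_, fun v hv => ?_, fun g H c => hφsmul H g c⟩
  · rintro ⟨H, c⟩
    rw [hCA.neighborSet_infinite_iff hedge, isCompact_stabilizer_iff_of_mem_orbit (hφorbit H c),
      hu H]
    exact H.2.2
  · rintro ⟨H, c⟩ ⟨K, d⟩ (hφ : φ H c = φ K d)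
    have huHK : u H ∈ orbit G (u K) :=
      orbit_eq_iff.mpr (hφorbit K d) ▸ hφ ▸ mem_orbit_symm.mp (hφorbit H c)
    obtain rfl : H = K :=
      Subtype.ext (hpp.eq_of_mem_orbit H.2.1 K.2.1 H.2.2 K.2.2 (hu H) (hu K) huHK)
    obtain rfl := hφinj H hφ
    rfl
  · obtain ⟨H, hHℋ, hH, hvorbit⟩ :=
      hCA.exists_mem_orbit ((hCA.neighborSet_infinite_iff hedge).mp hv)
    obtain ⟨c, hc⟩ := (hφrange ⟨H, hHℋ, hH⟩).symm ▸ hvorbit _ (hu ⟨H, hHℋ, hH⟩)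
    exact ⟨⟨⟨H, hHℋ, hH⟩, c⟩, hc⟩

/-- For a proper pair `(G, ℋ)` and a Cayley-Abels graph `Γ` of `G` with respect to `ℋ`
containing at least one edge, there is a `G`-equivariant bijection between the disjoint
union of the coset spaces `G/H` for non-compact `H ∈ ℋ` and the set of vertices of `Γ`
of infinite degree. -/
theorem equivariant_bijection_cosets_infinite_degree
    {G : Type u} [Group G] [TopologicalSpace G] [IsTopologicalGroup G] [T2Space G]
    (ℋ : Finset (Subgroup G)) (hpp : IsProperPair G ℋ)
    {V : Type v} [MulAction G V] (Γ : SimpleGraph V)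
    (hCA : IsCayleyAbelsGraph G ℋ Γ)
    (hedge : ∃ a b : V, Γ.Adj a b) :
    ∃ f : ((H : {H : Subgroup G // H ∈ ℋ ∧ ¬ IsCompact (H : Set G)}) ×
        (G ⧸ (H.1 : Subgroup G))) → V,
      (∀ x, (Γ.neighborSet (f x)).Infinite) ∧
      Function.Injective f ∧
      (∀ v : V, (Γ.neighborSet v).Infinite → ∃ x, f x = v) ∧
      (∀ (g : G) (H : {H : Subgroup G // H ∈ ℋ ∧ ¬ IsCompact (H : Set G)})
        (c : G ⧸ (H.1 : Subgroup G)), f ⟨H, g • c⟩ = g • f ⟨H, c⟩) :=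
  equivariant_bijection_cosets_infinite_degree_general ℋ hpp Γ hCA hedge
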